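/- A three-point mixture beats every point mass: Fix n ≥ 2 and ε ∈ (0,1). There exists a₀ > 0 such that for all a ≥ a₀, taking the data vector z* := (−a, a, 0, …, 0) ∈ ℝⁿ and the mixing distribution G_ε := (1−ε) δ₀ + (ε/2) δ_{−a} + (ε/2) δ_a, one has sup_{μ ∈ ℝ} ∏_{i=1}^n φ(z*_i − μ) < ∏_{i=1}^n f_{G_ε}(z*_i); in particular no point mass maximizes the Gaussian mixture likelihood at z*. -/

import Mathlib

open MeasureTheory Real
open scoped ENNReal BigOperators

/-- The standard normal density `φ(x) = (2π)^{-1/2} exp(-x²/2)`. -/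
noncomputable def phi (x : ℝ) : ℝ := (Real.sqrt (2 * Real.pi))⁻¹ * Real.exp (-(x ^ 2) / 2)

/-- The Gaussian mixture density `f_G(z) = ∫ φ(z-μ) dG(μ)`. -/
noncomputable def mixDens (G : Measure ℝ) (z : ℝ) : ℝ := ∫ μ, phi (z - μ) ∂G

/-- The data vector `z* = (-a, a, 0, …, 0)`. -/
noncomputable def zstar (n : ℕ) (a : ℝ) : Fin n → ℝ :=
  fun i => if (i : ℕ) = 0 then -a else if (i : ℕ) = 1 then a else 0

/-- The three-point mixture `G_ε = (1-ε) δ₀ + (ε/2) δ_{-a} + (ε/2) δ_a`. -/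
noncomputable def Geps (ε a : ℝ) : Measure ℝ :=
  ENNReal.ofReal (1 - ε) • Measure.dirac 0 + ENNReal.ofReal (ε / 2) • Measure.dirac (-a) +
    ENNReal.ofReal (ε / 2) • Measure.dirac a

lemma phi_pos (x : ℝ) : 0 < phi x := by unfold phi; positivity

lemma phi_eq (x : ℝ) : phi x = phi 0 * Real.exp (-(x ^ 2) / 2) := by
  simp [phi]

lemma phi_le (x : ℝ) : phi x ≤ phi 0 := by
  rw [phi_eq x]
  nth_rewrite 2 [show phi 0 = phi 0 * 1 by ring]
  gcongr
  · exact (phi_pos 0).le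
  · rw [show (1:ℝ) = Real.exp 0 by simp]
    apply Real.exp_le_exp.2
    nlinarith [sq_nonneg x]

lemma integrable_smul_dirac (f : ℝ → ℝ) (hf : Continuous f) (c x : ℝ) :
    Integrable f (ENNReal.ofReal c • Measure.dirac x) := by
  refine ⟨hf.aestronglyMeasurable, ?_⟩
  rw [hasFiniteIntegral_def, lintegral_smul_measure, lintegral_dirac]
  exact ENNReal.mul_lt_top ENNReal.ofReal_lt_top ENNReal.coe_lt_top

lemma integral_smul_dirac (f : ℝ → ℝ) (c x : ℝ) (hc : 0 ≤ c) :
    ∫ μ, f μ ∂(ENNReal.ofReal c • Measure.dirac x) = c * f x := by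
  rw [integral_smul_measure, integral_dirac, ENNReal.toReal_ofReal hc]
  rfl

lemma mixDens_Geps (ε a : ℝ) (hε0 : 0 ≤ ε) (hε1 : ε ≤ 1) (z : ℝ) :
    mixDens (Geps ε a) z
      = (1 - ε) * phi z + (ε / 2) * phi (z + a) + (ε / 2) * phi (z - a) := by
  have hc : Continuous fun μ : ℝ => phi (z - μ) := by
    unfold phi; continuity
  unfold mixDens Geps
  rw [integral_add_measure ((integrable_smul_dirac _ hc _ _).add_measure
        (integrable_smul_dirac _ hc _ _)) (integrable_smul_dirac _ hc _ _),
      integral_add_measure (integrable_smul_dirac _ hc _ _) (integrable_smul_dirac _ hc _ _),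
      integral_smul_dirac _ _ _ (by linarith), integral_smul_dirac _ _ _ (by linarith),
      integral_smul_dirac _ _ _ (by linarith)]
  ring_nf

lemma prod_zstar (n : ℕ) (hn : 2 ≤ n) (a : ℝ) (g : ℝ → ℝ) :
    ∏ i : Fin n, g (zstar n a i) = g (-a) * g a * g 0 ^ (n - 2) := by
  haveI : NeZero n := ⟨by omega⟩
  have hv1 : ((1 : Fin n) : ℕ) = 1 := by
    rw [Fin.val_one']
    exact Nat.mod_eq_of_lt (by omega)
  have h01 : (0 : Fin n) ≠ (1 : Fin n) := by
    intro h
    have h' : ((0 : Fin n) : ℕ) = ((1 : Fin n) : ℕ) := by rw [h]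
    rw [hv1] at h'
    simp at h'
  classical
  rw [← Finset.prod_mul_prod_compl ({0, 1} : Finset (Fin n))]
  congr 1
  · rw [Finset.prod_pair h01]
    show g (zstar n a 0) * g (zstar n a 1) = _
    unfold zstar
    rw [hv1]
    norm_num
  · have hcard : ({0, 1} : Finset (Fin n))ᶜ.card = n - 2 := by
      rw [Finset.card_compl, Finset.card_pair h01]
      simp
    rw [Finset.prod_congr rfl (fun i hi => ?_), Finset.prod_const, hcard]
    simp only [Finset.mem_compl, Finset.mem_insert, Finset.mem_singleton, not_or] at hi
    have hi0 : (i : ℕ) ≠ 0 := fun h => hi.1 (by apply Fin.ext; rw [h]; simp)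
    have hi1 : (i : ℕ) ≠ 1 := fun h => hi.2 (by apply Fin.ext; rw [h, hv1])
    simp [zstar, hi0, hi1]

/-- A three-point mixture beats every point mass: for `n ≥ 2`, `ε ∈ (0,1)` and all large
enough `a`, the supremum over point masses of the Gaussian likelihood at `z*` is strictly
smaller than the mixture likelihood of `G_ε`. -/
theorem three_point_mixture_beats_point_masses
    (n : ℕ) (hn : 2 ≤ n) (ε : ℝ) (hε0 : 0 < ε) (hε1 : ε < 1) :
    ∃ a₀ : ℝ, 0 < a₀ ∧ ∀ a : ℝ, a₀ ≤ a →
      (⨆ μ : ℝ, ∏ i, phi (zstar n a i - μ)) < ∏ i, mixDens (Geps ε a) (zstar n a i) := by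
  set P : ℝ := phi 0 with hP
  have hPpos : 0 < P := phi_pos 0
  set K : ℝ := (ε / 2) ^ 2 * (1 - ε) ^ (n - 2) with hK
  have hKpos : 0 < K := mul_pos (by positivity) (pow_pos (by linarith) _)
  set L : ℝ := -Real.log K with hL
  refine ⟨Real.sqrt (max L 0) + 1, by positivity, fun a ha => ?_⟩
  have ha0 : 0 < a := lt_of_lt_of_le (by positivity) ha
  have haK : Real.exp (-a ^ 2) < K := by
    have h2 : (Real.sqrt (max L 0) + 1) ^ 2 ≤ a ^ 2 :=
      pow_le_pow_left₀ (by positivity) ha 2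
    have h3 : max L 0 < (Real.sqrt (max L 0) + 1) ^ 2 := by
      have := Real.sq_sqrt (le_max_right L 0)
      nlinarith [Real.sqrt_nonneg (max L 0)]
    have h1 : L < a ^ 2 := lt_of_le_of_lt (le_max_left L 0) (lt_of_lt_of_le h3 h2)
    calc Real.exp (-a ^ 2) < Real.exp (Real.log K) := by
          apply Real.exp_lt_exp.2; rw [hL] at h1; linarith
      _ = K := Real.exp_log hKpos
  -- upper bound on the sup
  have hsup : (⨆ μ : ℝ, ∏ i, phi (zstar n a i - μ))
      ≤ P ^ 2 * Real.exp (-a ^ 2) * P ^ (n - 2) := by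
    apply ciSup_le
    intro μ
    rw [prod_zstar n hn a (fun z => phi (z - μ))]
    have h1 : phi (-a - μ) * phi (a - μ) ≤ P ^ 2 * Real.exp (-a ^ 2) := by
      rw [phi_eq (-a - μ), phi_eq (a - μ)]
      have : P * Real.exp (-((-a - μ) ^ 2) / 2) * (P * Real.exp (-((a - μ) ^ 2) / 2))
          = P ^ 2 * Real.exp (-((-a - μ) ^ 2) / 2 + -((a - μ) ^ 2) / 2) := by
        rw [Real.exp_add]; ring
      rw [this]
      apply mul_le_mul_of_nonneg_left _ (by positivity)
      apply Real.exp_le_exp.2; nlinarith [sq_nonneg μ]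
    have h2 : phi (0 - μ) ^ (n - 2) ≤ P ^ (n - 2) :=
      pow_le_pow_left₀ (phi_pos _).le (phi_le _) _
    have hnn : (0:ℝ) ≤ phi (-a - μ) * phi (a - μ) :=
      mul_nonneg (phi_pos _).le (phi_pos _).le
    calc phi (-a - μ) * phi (a - μ) * phi (0 - μ) ^ (n - 2)
        ≤ (P ^ 2 * Real.exp (-a ^ 2)) * P ^ (n - 2) :=
          mul_le_mul h1 h2 (pow_nonneg (phi_pos _).le _) (by positivity)
      _ = P ^ 2 * Real.exp (-a ^ 2) * P ^ (n - 2) := by ring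
  -- lower bound on the mixture product
  have hm := mixDens_Geps ε a hε0.le hε1.le
  have hprod : ∏ i, mixDens (Geps ε a) (zstar n a i)
      = mixDens (Geps ε a) (-a) * mixDens (Geps ε a) a * mixDens (Geps ε a) 0 ^ (n - 2) :=
    prod_zstar n hn a _
  have hlow : (ε / 2 * P) * (ε / 2 * P) * ((1 - ε) * P) ^ (n - 2)
      ≤ ∏ i, mixDens (Geps ε a) (zstar n a i) := by
    rw [hprod]
    have l1 : ε / 2 * P ≤ mixDens (Geps ε a) (-a) := by
      rw [hm (-a)]
      have := phi_pos (-a); have := phi_pos (-a - a)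
      have h0 : phi (-a + a) = P := by norm_num [hP]
      nlinarith [phi_pos (-a), phi_pos (-a - a)]
    have l2 : ε / 2 * P ≤ mixDens (Geps ε a) a := by
      rw [hm a]
      have h0 : phi (a - a) = P := by norm_num [hP]
      nlinarith [phi_pos a, phi_pos (a + a)]
    have l3 : (1 - ε) * P ≤ mixDens (Geps ε a) 0 := by
      rw [hm 0]
      nlinarith [phi_pos (0 + a), phi_pos (0 - a)]
    have l4 : ((1 - ε) * P) ^ (n - 2) ≤ mixDens (Geps ε a) 0 ^ (n - 2) :=
      pow_le_pow_left₀ (mul_nonneg (by linarith) hPpos.le) l3 _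
    have hnn1 : (0:ℝ) ≤ ε / 2 * P := by positivity
    calc (ε / 2 * P) * (ε / 2 * P) * ((1 - ε) * P) ^ (n - 2)
        ≤ (mixDens (Geps ε a) (-a) * mixDens (Geps ε a) a) * ((1 - ε) * P) ^ (n - 2) := by
          exact mul_le_mul_of_nonneg_right (mul_le_mul l1 l2 hnn1 (by linarith))
            (pow_nonneg (mul_nonneg (by linarith) hPpos.le) _)
      _ ≤ (mixDens (Geps ε a) (-a) * mixDens (Geps ε a) a) * mixDens (Geps ε a) 0 ^ (n - 2) := by
          exact mul_le_mul_of_nonneg_left l4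
            (mul_nonneg (le_trans (by positivity) l1) (le_trans (by positivity) l2))
  refine lt_of_le_of_lt hsup (lt_of_lt_of_le ?_ hlow)
  have hexp : P ^ 2 * Real.exp (-a ^ 2) * P ^ (n - 2) < P ^ 2 * K * P ^ (n - 2) := by
    have := mul_lt_mul_of_pos_right haK (show (0:ℝ) < P ^ 2 * P ^ (n - 2) by positivity)
    nlinarith
  refine lt_of_lt_of_le hexp (le_of_eq ?_)
  rw [hK, mul_pow]
  ring
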